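/- Fix a finite MDP, c ≥ 0, and suppose L is a γ-span contraction with 0 ≤ γ < 1. For any initial vector v₀ ∈ ℝ^S and reference state s̄, the relative value iteration sequence (v_n) converges (in ℝ^S) to a vector h solving the optimality equation T_c h = h + g⁺ e for some g⁺ ∈ ℝ, and moreover the sequence of vectors T_c^{n+1} v₀ − T_c^n v₀ converges to the constant vector g⁺ e. -/
import Mathlib


open Finset

/-- Span semi-norm of a vector `v : S → ℝ` on a nonempty finite set `S`. -/
noncomputable def span {S : Type*} [Fintype S] [Nonempty S] (v : S → ℝ) : ℝ :=
  Finset.univ.sup' Finset.univ_nonempty v - Finset.univ.inf' Finset.univ_nonempty v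

/-- Optimal Bellman operator `L v (s) = max_a (r s a + Σ_{s'} p s a s' * v s')` of a
finite MDP with state space `S`, action spaces `A s`, rewards `r` and transition kernel `p`. -/
noncomputable def bellman {S : Type*} [Fintype S] [Nonempty S] {A : S → Type*}
    [∀ s, Fintype (A s)] [∀ s, Nonempty (A s)]
    (r : ∀ s, A s → ℝ) (p : ∀ s, A s → S → ℝ) (v : S → ℝ) : S → ℝ :=
  fun s => Finset.univ.sup' Finset.univ_nonempty
    (fun a : A s => r s a + ∑ s', p s a s' * v s')

/-- Span-truncated optimal Bellman operator
`T_c v (s) = min (L v s) (min_x L v x + c)`. -/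
noncomputable def Tc {S : Type*} [Fintype S] [Nonempty S] {A : S → Type*}
    [∀ s, Fintype (A s)] [∀ s, Nonempty (A s)]
    (c : ℝ) (r : ∀ s, A s → ℝ) (p : ∀ s, A s → S → ℝ) (v : S → ℝ) : S → ℝ :=
  fun s => min (bellman r p v s)
    (Finset.univ.inf' Finset.univ_nonempty (bellman r p v) + c)

/-- Bellman operator of a randomized decision rule `d`:
`L_d v (s) = Σ_a d s a * (r s a + Σ_{s'} p s a s' * v s')`. -/
noncomputable def bellmanD {S : Type*} [Fintype S] {A : S → Type*} [∀ s, Fintype (A s)]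
    (r : ∀ s, A s → ℝ) (p : ∀ s, A s → S → ℝ)
    (d : ∀ s, A s → ℝ) (v : S → ℝ) : S → ℝ :=
  fun s => ∑ a, d s a * (r s a + ∑ s', p s a s' * v s')

section Aux

variable {S : Type*} [Fintype S] [Nonempty S] {A : S → Type*}
    [∀ s, Fintype (A s)] [∀ s, Nonempty (A s)]
    (r : ∀ s, A s → ℝ) (p : ∀ s, A s → S → ℝ)


lemma inf'_add_const {ι : Type*} (s : Finset ι) (hs : s.Nonempty) (f : ι → ℝ) (α : ℝ) :
    s.inf' hs (fun i => f i + α) = s.inf' hs f + α := by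
  apply le_antisymm
  · obtain ⟨i, hi, hfi⟩ := Finset.exists_mem_eq_inf' hs f
    calc s.inf' hs (fun i => f i + α) ≤ f i + α := Finset.inf'_le _ hi
    _ = s.inf' hs f + α := by rw [hfi]
  · apply Finset.le_inf'
    intro i hi
    have := Finset.inf'_le f hi
    linarith

lemma abs_sub_le_span (x : S → ℝ) (s t : S) : |x s - x t| ≤ span x := by
  rw [abs_sub_le_iff]
  constructor <;>
    exact sub_le_sub (Finset.le_sup' _ (Finset.mem_univ _))
      (Finset.inf'_le _ (Finset.mem_univ _))

lemma span_nonneg (x : S → ℝ) : 0 ≤ span x := by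
  have := abs_sub_le_span x (Classical.arbitrary S) (Classical.arbitrary S)
  have h0 : (0:ℝ) ≤ |x (Classical.arbitrary S) - x (Classical.arbitrary S)| := abs_nonneg _
  linarith

lemma bellman_add (hp1 : ∀ s a, ∑ s', p s a s' = 1) (w : S → ℝ) (α : ℝ) (s : S) :
    bellman r p (fun t => w t + α) s = bellman r p w s + α := by
  unfold bellman
  rw [Finset.sup'_add]
  apply Finset.sup'_congr _ rfl
  intro a _
  have : ∑ s', p s a s' * (w s' + α) = (∑ s', p s a s' * w s') + α := by
    simp only [mul_add, Finset.sum_add_distrib, ← Finset.sum_mul, hp1 s a, one_mul]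
  rw [this]; ring

lemma Tc_add (hp1 : ∀ s a, ∑ s', p s a s' = 1) (c : ℝ) (w : S → ℝ) (α : ℝ) (s : S) :
    Tc c r p (fun t => w t + α) s = Tc c r p w s + α := by
  unfold Tc
  have h1 : Finset.univ.inf' Finset.univ_nonempty (bellman r p (fun t => w t + α))
      = Finset.univ.inf' Finset.univ_nonempty (bellman r p w) + α := by
    rw [show (bellman r p fun t => w t + α) = fun x => bellman r p w x + α from
      funext (fun x => bellman_add r p hp1 w α x)]
    exact inf'_add_const _ _ _ _
  rw [h1, bellman_add r p hp1 w α s, ← min_add_add_right]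
  ring_nf

lemma Tc_sub_le (c : ℝ) (u v : S → ℝ) (s : S) :
    Tc c r p u s - Tc c r p v s ≤
      Finset.univ.sup' Finset.univ_nonempty
        (fun x => bellman r p u x - bellman r p v x) := by
  rw [sub_le_iff_le_add]
  unfold Tc
  rw [add_comm, ← min_add_add_left]
  apply le_min
  · apply min_le_of_left_le
    have h : bellman r p u s - bellman r p v s ≤ Finset.univ.sup' Finset.univ_nonempty
        (fun x => bellman r p u x - bellman r p v x) :=
      Finset.le_sup' (fun x => bellman r p u x - bellman r p v x) (Finset.mem_univ s)
    linarith
  · apply min_le_of_right_le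
    obtain ⟨t, _, ht⟩ := Finset.exists_mem_eq_inf' (Finset.univ_nonempty (α := S))
      (bellman r p v)
    have h1 : Finset.univ.inf' Finset.univ_nonempty (bellman r p u) ≤ bellman r p u t :=
      Finset.inf'_le _ (Finset.mem_univ t)
    have h2 : bellman r p u t - bellman r p v t ≤ Finset.univ.sup' Finset.univ_nonempty
        (fun x => bellman r p u x - bellman r p v x) :=
      Finset.le_sup' (fun x => bellman r p u x - bellman r p v x) (Finset.mem_univ t)
    rw [ht]
    linarith

lemma span_Tc_le (c : ℝ) (u v : S → ℝ) :
    span (fun s => Tc c r p u s - Tc c r p v s) ≤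
      span (fun s => bellman r p u s - bellman r p v s) := by
  unfold span
  have hub : Finset.univ.sup' Finset.univ_nonempty (fun s => Tc c r p u s - Tc c r p v s) ≤
      Finset.univ.sup' Finset.univ_nonempty (fun s => bellman r p u s - bellman r p v s) :=
    Finset.sup'_le _ _ (fun s _ => Tc_sub_le r p c u v s)
  have hlb : Finset.univ.inf' Finset.univ_nonempty (fun s => bellman r p u s - bellman r p v s) ≤
      Finset.univ.inf' Finset.univ_nonempty (fun s => Tc c r p u s - Tc c r p v s) := by
    apply Finset.le_inf'
    intro s _
    have h1 := Tc_sub_le r p c v u s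
    have h2 : Finset.univ.sup' Finset.univ_nonempty
        (fun x => bellman r p v x - bellman r p u x) ≤
        -(Finset.univ.inf' Finset.univ_nonempty
          (fun s => bellman r p u s - bellman r p v s)) := by
      apply Finset.sup'_le
      intro x _
      have h3 : Finset.univ.inf' Finset.univ_nonempty
          (fun s => bellman r p u s - bellman r p v s) ≤
          bellman r p u x - bellman r p v x :=
        Finset.inf'_le (fun s => bellman r p u s - bellman r p v s) (Finset.mem_univ x)
      linarith
    linarith
  linarith

lemma Tc_continuous (c : ℝ) (s : S) : Continuous (fun w : S → ℝ => Tc c r p w s) := by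
  have hb : ∀ x : S, Continuous (fun w : S → ℝ => bellman r p w x) := by
    intro x
    apply Continuous.finset_sup'_apply Finset.univ_nonempty
    intro a _
    exact continuous_const.add (continuous_finset_sum _ fun i _ =>
      continuous_const.mul (continuous_apply i))
  exact (hb s).min ((Continuous.finset_inf'_apply Finset.univ_nonempty
    (fun x _ => hb x)).add continuous_const)

end Aux

theorem relativeVI_converges {S : Type*} [Fintype S] [Nonempty S] {A : S → Type*}
    [∀ s, Fintype (A s)] [∀ s, Nonempty (A s)]
    (r : ∀ s, A s → ℝ) (p : ∀ s, A s → S → ℝ)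
    (hp0 : ∀ s a s', 0 ≤ p s a s') (hp1 : ∀ s a, ∑ s', p s a s' = 1)
    (c : ℝ) (hc : 0 ≤ c)
    (γ : ℝ) (hγ0 : 0 ≤ γ) (hγ1 : γ < 1)
    (hL : ∀ u v : S → ℝ,
      span (fun s => bellman r p u s - bellman r p v s) ≤ γ * span (fun s => u s - v s))
    (v₀ : S → ℝ) (sbar : S)
    (v : ℕ → S → ℝ) (hv0 : v 0 = v₀)
    (hv : ∀ n s, v (n + 1) s = Tc c r p (v n) s - Tc c r p (v n) sbar) :
    ∃ (h : S → ℝ) (g : ℝ),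
      Filter.Tendsto v Filter.atTop (nhds h) ∧
      (∀ s, Tc c r p h s = h s + g) ∧
      Filter.Tendsto
        (fun n => (fun w => Tc c r p w)^[n + 1] v₀ - (fun w => Tc c r p w)^[n] v₀)
        Filter.atTop (nhds (fun _ => g)) := by
  classical
  obtain ⟨u, hu⟩ : ∃ u : ℕ → S → ℝ, ∀ n, u n = (fun w => Tc c r p w)^[n] v₀ :=
    ⟨_, fun n => rfl⟩
  have hu0 : u 0 = v₀ := by rw [hu]; rfl
  have hus : ∀ n, u (n + 1) = Tc c r p (u n) := by
    intro n
    rw [hu, hu]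
    exact Function.iterate_succ_apply' _ n v₀
  -- v n equals u n plus a constant
  have hβ : ∀ n, ∃ β : ℝ, ∀ s, v n s = u n s + β := by
    intro n
    induction n with
    | zero => exact ⟨0, fun s => by rw [hv0, hu0, add_zero]⟩
    | succ n ih =>
      obtain ⟨β, hβn⟩ := ih
      have hvn : v n = fun t => u n t + β := funext hβn
      have h1 : ∀ t, Tc c r p (v n) t = Tc c r p (u n) t + β := fun t => by
        rw [hvn]; exact Tc_add r p hp1 c (u n) β t
      refine ⟨-(Tc c r p (u n) sbar), fun s => ?_⟩
      rw [hv n s, h1 s, h1 sbar, hus n]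
      ring
  have hdiff : ∀ n s, u (n + 1) s - u n s = Tc c r p (v n) s - v n s := by
    intro n s
    obtain ⟨β, hβn⟩ := hβ n
    have hvn : v n = fun t => u n t + β := funext hβn
    have h1 : Tc c r p (v n) s = Tc c r p (u n) s + β := by
      rw [hvn]; exact Tc_add r p hp1 c (u n) β s
    rw [hus n, h1, hβn s]
    ring
  have hvn1 : ∀ n s, v (n + 1) s = u (n + 1) s - u (n + 1) sbar := by
    intro n s
    obtain ⟨β, hβn⟩ := hβ n
    have hvn : v n = fun t => u n t + β := funext hβn
    have h1 : ∀ t, Tc c r p (v n) t = Tc c r p (u n) t + β := fun t => by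
      rw [hvn]; exact Tc_add r p hp1 c (u n) β t
    rw [hv n s, h1 s, h1 sbar, hus n]
    ring
  -- geometric decay of spans
  have hspan : ∀ n, span (fun s => u (n + 1) s - u n s) ≤
      γ ^ n * span (fun s => u 1 s - u 0 s) := by
    intro n
    induction n with
    | zero => rw [pow_zero, one_mul]
    | succ n ih =>
      have h1 : span (fun s => u (n + 2) s - u (n + 1) s) ≤
          γ * span (fun s => u (n + 1) s - u n s) := by
        calc span (fun s => u (n + 2) s - u (n + 1) s)
            = span (fun s => Tc c r p (u (n + 1)) s - Tc c r p (u n) s) := by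
              rw [hus (n + 1), hus n]
          _ ≤ span (fun s => bellman r p (u (n + 1)) s - bellman r p (u n) s) :=
              span_Tc_le r p c _ _
          _ ≤ γ * span (fun s => u (n + 1) s - u n s) := hL _ _
      calc span (fun s => u (n + 1 + 1) s - u (n + 1) s)
          ≤ γ * span (fun s => u (n + 1) s - u n s) := h1
        _ ≤ γ * (γ ^ n * span (fun s => u 1 s - u 0 s)) :=
            mul_le_mul_of_nonneg_left ih hγ0
        _ = γ ^ (n + 1) * span (fun s => u 1 s - u 0 s) := by ring
  set D : ℝ := span (fun s => u 1 s - u 0 s) with hD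
  have hD0 : 0 ≤ D := span_nonneg _
  set C : ℝ := max D (dist (v 0) (v 1)) with hC
  have hC0 : 0 ≤ C := le_trans dist_nonneg (le_max_right _ _)
  have hCd : ∀ n, dist (v n) (v (n + 1)) ≤ C * γ ^ n := by
    intro n
    match n with
    | 0 =>
      rw [pow_zero, mul_one]
      exact le_max_right _ _
    | (n + 1) =>
      have h0 : 0 ≤ C * γ ^ (n + 1) := mul_nonneg hC0 (pow_nonneg hγ0 _)
      rw [dist_pi_le_iff h0]
      intro s
      rw [Real.dist_eq]
      calc |v (n + 1) s - v (n + 1 + 1) s|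
          = |(fun t => u (n + 2) t - u (n + 1) t) s -
              (fun t => u (n + 2) t - u (n + 1) t) sbar| := by
            rw [show v (n + 1) s - v (n + 1 + 1) s =
              -((fun t => u (n + 2) t - u (n + 1) t) s -
                (fun t => u (n + 2) t - u (n + 1) t) sbar) from by
                simp only [hvn1]; ring, abs_neg]
        _ ≤ span (fun t => u (n + 2) t - u (n + 1) t) := abs_sub_le_span (fun t => u (n + 2) t - u (n + 1) t) s sbar
        _ ≤ γ ^ (n + 1) * D := hspan (n + 1)
        _ ≤ γ ^ (n + 1) * C :=
            mul_le_mul_of_nonneg_left (le_max_left _ _) (pow_nonneg hγ0 _)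
        _ = C * γ ^ (n + 1) := mul_comm _ _
  have hcauchy : CauchySeq v := cauchySeq_of_le_geometric γ C hγ1 hCd
  obtain ⟨h, hh⟩ := cauchySeq_tendsto_of_complete hcauchy
  have hhs : ∀ s, Filter.Tendsto (fun n => v n s) Filter.atTop (nhds (h s)) :=
    fun s => tendsto_pi_nhds.1 hh s
  have hTcC : ∀ s, Filter.Tendsto (fun n => Tc c r p (v n) s) Filter.atTop
      (nhds (Tc c r p h s)) :=
    fun s => ((Tc_continuous r p c s).tendsto h).comp hh
  have hfix : ∀ s, h s = Tc c r p h s - Tc c r p h sbar := by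
    intro s
    have t1 : Filter.Tendsto (fun n => v (n + 1) s) Filter.atTop (nhds (h s)) :=
      (hhs s).comp (Filter.tendsto_add_atTop_nat 1)
    have t2 : Filter.Tendsto (fun n => v (n + 1) s) Filter.atTop
        (nhds (Tc c r p h s - Tc c r p h sbar)) := by
      simp only [hv]
      exact (hTcC s).sub (hTcC sbar)
    exact tendsto_nhds_unique t1 t2
  refine ⟨h, Tc c r p h sbar, hh, fun s => by have := hfix s; linarith, ?_⟩
  rw [tendsto_pi_nhds]
  intro s
  have heq : (fun n => ((fun w => Tc c r p w)^[n + 1] v₀ -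
      (fun w => Tc c r p w)^[n] v₀) s) = fun n => Tc c r p (v n) s - v n s := by
    funext n
    simp only [Pi.sub_apply, ← hu]
    exact hdiff n s
  rw [heq]
  have hval : Tc c r p h s - h s = Tc c r p h sbar := by
    have := hfix s; linarith
  rw [← hval]
  exact (hTcC s).sub (hhs s)
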